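/- arXiv:1809.07755 — 9 statements merged into one kernel-verified Lean document; each statement's English description precedes it below -/
import Mathlib

section
/- For a finite field F of odd characteristic and any nontrivial multiplicative character χ on F with χ ≠ λ (the quadratic character), one has j_F(χ, λ) = χ(4) · j_F(χ, χ). -/
open Finset
open scoped Classical

/-- Jacobi sum with the sign convention of the paper:
`j_F(χ₁, χ₂) = -∑_{x₁+x₂=1} χ₁(x₁)χ₂(x₂)`. -/
noncomputable def jac {F : Type*} [Field F] [Fintype F]
    (χ₁ χ₂ : MulChar F ℂ) : ℂ :=
  -∑ x : F, χ₁ x * χ₂ (1 - x)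

/-- The double character sum `B(F, χ) = ∑_{x ∈ F} ∑_{z ∈ F^×} χ(z) λ(x³ + x²z - 4xz)`. -/

noncomputable def Bsum (F : Type*) [Field F] [Fintype F]
    (χ lam : F → ℂ) : ℂ :=
  ∑ x : F, ∑ z ∈ Finset.univ.filter (fun z : F => z ≠ 0),
    χ z * lam (x ^ 3 + x ^ 2 * z - 4 * x * z)

theorem jacobi_sum_chi_quadratic {F : Type*} [Field F] [Fintype F]
    (hchar : ringChar F ≠ 2)
    (lam : MulChar F ℂ) (hl2 : lam ^ 2 = 1) (hl1 : lam ≠ 1)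
    (χ : MulChar F ℂ) (hχ : χ ≠ 1) (hχlam : χ ≠ lam) :
    jac χ lam = χ 4 * jac χ χ := by
  classical
  have h2 : (2 : F) ≠ 0 := Ring.two_ne_zero hchar
  -- lam squares to 1 on nonzero elements
  have hmul : ∀ a : F, a ≠ 0 → lam a * lam a = 1 := by
    intro a ha
    have h := congrArg (fun ψ : MulChar F ℂ => ψ a) hl2
    simpa [pow_two, MulChar.mul_apply,
      MulChar.one_apply (isUnit_iff_ne_zero.mpr ha)] using h
  have hsq : ∀ b : F, b ≠ 0 → lam (b * b) = 1 := fun b hb => by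
    rw [map_mul]; exact hmul b hb
  -- lam agrees with the quadratic character
  have hex : ¬ ∀ a : Fˣ, lam a = 1 := fun h => hl1 (MulChar.eq_one_iff.mpr h)
  push_neg at hex
  obtain ⟨a, ha⟩ := hex
  have ha0 : (a : F) ≠ 0 := a.ne_zero
  have hanm1 : lam (a : F) = -1 := by
    rcases mul_self_eq_one_iff.mp (hmul a ha0) with h | h
    · exact absurd h ha
    · exact h
  have hans : ¬ IsSquare (a : F) := by
    rintro ⟨b, hb⟩
    have hb0 : b ≠ 0 := fun h => ha0 (by simp [hb, h])
    rw [hb, hsq b hb0] at hanm1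
    norm_num at hanm1
  have haq : quadraticChar F (a : F) = -1 :=
    quadraticChar_neg_one_iff_not_isSquare.mpr hans
  have lam_eq : ∀ s : F, lam s = ((quadraticChar F s : ℤ) : ℂ) := by
    intro s
    by_cases hs : s = 0
    · simp [hs, MulChar.map_zero, quadraticChar_zero]
    by_cases hsqr : IsSquare s
    · obtain ⟨b, rfl⟩ := hsqr
      have hb : b ≠ 0 := fun h => hs (by simp [h])
      rw [hsq b hb, (quadraticChar_one_iff_isSquare (by exact hs)).mpr ⟨b, rfl⟩]
      norm_num
    · rw [quadraticChar_neg_one_iff_not_isSquare.mpr hsqr]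
      rcases mul_self_eq_one_iff.mp (hmul s hs) with h | h
      · exfalso
        have hq : quadraticChar F (s * a) = 1 := by
          rw [map_mul, haq, quadraticChar_neg_one_iff_not_isSquare.mpr hsqr]
          norm_num
        have hsa : IsSquare (s * (a : F)) :=
          (quadraticChar_one_iff_isSquare (mul_ne_zero hs ha0)).mp hq
        obtain ⟨b, hb⟩ := hsa
        have hb0 : b ≠ 0 := by
          rintro rfl; exact mul_ne_zero hs ha0 (by simpa using hb)
        have : lam (s * (a : F)) = 1 := hb ▸ hsq b hb0
        rw [map_mul, h, hanm1] at this
        norm_num at this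
      · push_cast; exact h
  -- counting square roots
  have count : ∀ s : F, ((univ.filter fun t : F => t ^ 2 = s).card : ℂ) = 1 + lam s := by
    intro s
    have h := quadraticChar_card_sqrts hchar s
    rw [Set.toFinset_setOf] at h
    rw [lam_eq s]
    have h' : ((Finset.univ.filter fun t : F => t ^ 2 = s).card : ℂ)
        = ((quadraticChar F s : ℤ) : ℂ) + 1 := by exact_mod_cast congrArg ((↑·) : ℤ → ℂ) h
    rw [h']; ring
  -- fiberwise sum
  have fib : ∑ t : F, χ (1 - t ^ 2) = ∑ s : F, (1 + lam s) * χ (1 - s) := by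
    rw [← Finset.sum_fiberwise' univ (fun t : F => t ^ 2) (fun s => χ (1 - s))]
    refine Finset.sum_congr rfl fun s _ => ?_
    rw [Finset.sum_const, nsmul_eq_mul, count s]
  have zero1 : ∑ s : F, χ (1 - s) = 0 := by
    have h := Equiv.sum_comp (Equiv.subLeft (1 : F)) (fun u => χ u)
    simp only [Equiv.subLeft_apply] at h
    rw [h]
    exact MulChar.sum_eq_zero_of_ne_one hχ
  -- substitution t = 1 - 2x
  have subst : ∑ t : F, χ (1 - t ^ 2) = χ 4 * ∑ x : F, χ x * χ (1 - x) := by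
    have he : Function.Bijective (fun x : F => 1 - 2 * x) := by
      refine Finite.injective_iff_bijective.mp fun x y hxy => ?_
      exact mul_left_cancel₀ h2 (sub_right_injective hxy)
    rw [← Function.Bijective.sum_comp he (fun t => χ (1 - t ^ 2)), Finset.mul_sum]
    refine Finset.sum_congr rfl fun x _ => ?_
    have hx : 1 - (1 - 2 * x) ^ 2 = 4 * (x * (1 - x)) := by ring
    simp only [hx, map_mul]
  -- reindex jac χ lam
  have hj : ∑ x : F, χ x * lam (1 - x) = ∑ s : F, lam s * χ (1 - s) := by
    have h := Equiv.sum_comp (Equiv.subLeft (1 : F)) (fun x => χ x * lam (1 - x))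
    rw [← h]
    refine Finset.sum_congr rfl fun s _ => ?_
    simp [Equiv.subLeft_apply, sub_sub_cancel, mul_comm]
  have expand : ∑ s : F, (1 + lam s) * χ (1 - s)
      = ∑ s : F, χ (1 - s) + ∑ s : F, lam s * χ (1 - s) := by
    rw [← Finset.sum_add_distrib]
    exact Finset.sum_congr rfl fun s _ => by ring
  have key : ∑ s : F, lam s * χ (1 - s) = χ 4 * ∑ x : F, χ x * χ (1 - x) := by
    have h := fib.symm.trans subst
    rw [expand, zero1, zero_add] at h
    exact h.symm ▸ h
  simp only [jac]
  rw [hj, key]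
  ring
end

section
/- Let F be a finite field with |F| ≡ 1 (mod 4), λ its quadratic character, and let θ, λθ be the two multiplicative characters of exact order 4 on F^×. Then ∑_{x ∈ F} λ(x(x² - 4)) = -( j_F(θ, θ) + j_F(λθ, λθ) ), where j_F denotes the Jacobi sum. -/
open Finset
open scoped Classical

section Aux

variable {F : Type*} [Field F] [Fintype F]

/-- product of two nonsquares in a finite field is a square -/
lemma aux_nonsq_mul (a b : F) (ha : ¬ IsSquare a) (hb : ¬ IsSquare b) :
    IsSquare (a * b) := by
  classical
  have ha0 : a ≠ 0 := fun h => ha (h ▸ ⟨0, by ring⟩)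
  have hb0 : b ≠ 0 := fun h => hb (h ▸ ⟨0, by ring⟩)
  have h1 : quadraticChar F a = -1 := (quadraticChar_neg_one_iff_not_isSquare).2 ha
  have h2 : quadraticChar F b = -1 := (quadraticChar_neg_one_iff_not_isSquare).2 hb
  have : quadraticChar F (a * b) = 1 := by rw [map_mul, h1, h2]; ring
  exact (quadraticChar_one_iff_isSquare (mul_ne_zero ha0 hb0)).1 this

/-- value of a nontrivial quadratic character -/
lemma quad_val (χ : MulChar F ℂ) (h2 : χ ^ 2 = 1) (h1 : χ ≠ 1) (t : F) :
    χ t = if t = 0 then 0 else if IsSquare t then 1 else -1 := by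
  classical
  have hsq : ∀ c : F, c ≠ 0 → χ c * χ c = 1 := by
    intro c hc
    have h : (χ ^ 2) c = 1 := by rw [h2, MulChar.one_apply (isUnit_iff_ne_zero.2 hc)]
    rwa [pow_two, MulChar.mul_apply] at h
  have hsq1 : ∀ c : F, c ≠ 0 → χ (c * c) = 1 := fun c hc => by
    rw [map_mul]; exact hsq c hc
  by_cases h0 : t = 0
  · simp [h0, MulChar.map_nonunit χ (by simp : ¬ IsUnit (0:F))]
  by_cases hS : IsSquare t
  · obtain ⟨r, hr⟩ := hS
    have hr0 : r ≠ 0 := by rintro rfl; exact h0 (by simp [hr])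
    rw [if_neg h0, if_pos ⟨r, hr⟩, hr]
    exact hsq1 r hr0
  · rw [if_neg h0, if_neg hS]
    rcases mul_self_eq_one_iff.1 (hsq t h0) with h | h
    · exfalso
      apply h1
      apply MulChar.ext
      intro a
      have ha0 : (a : F) ≠ 0 := a.ne_zero
      rw [MulChar.one_apply_coe]
      by_cases haS : IsSquare (a : F)
      · obtain ⟨r, hr⟩ := haS
        have hr0 : r ≠ 0 := by rintro rfl; exact ha0 (by simp [hr])
        rw [hr]; exact hsq1 r hr0
      · have hsq2 : IsSquare ((a : F) * t) := aux_nonsq_mul _ _ haS hS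
        obtain ⟨r, hr⟩ := hsq2
        have hr0 : r ≠ 0 := by
          rintro rfl; exact (mul_ne_zero ha0 h0) (by simp [hr])
        have hv : χ ((a : F) * t) = 1 := by rw [hr]; exact hsq1 r hr0
        rwa [map_mul, h, mul_one] at hv
    · exact h

/-- counting square roots with the quadratic character -/
lemma sqrt_count (hchar : ringChar F ≠ 2)
    (χ : MulChar F ℂ) (h2 : χ ^ 2 = 1) (h1 : χ ≠ 1) (d : F) :
    ∑ u : F, (if u ^ 2 = d then (1 : ℂ) else 0) = 1 + χ d := by
  classical
  have h20 : (2 : F) ≠ 0 := Ring.two_ne_zero hchar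
  by_cases h0 : d = 0
  · subst h0
    have he : ∀ u : F, (if u ^ 2 = (0:F) then (1:ℂ) else 0) = if u = 0 then 1 else 0 := by
      intro u
      by_cases hu : u = 0 <;> simp [hu, pow_eq_zero_iff]
    rw [Finset.sum_congr rfl (fun u _ => he u),
      Finset.sum_ite_eq' Finset.univ (0:F) (fun _ => (1:ℂ))]
    simp [quad_val χ h2 h1]
  by_cases hS : IsSquare d
  · obtain ⟨c, hc⟩ := hS
    have hc0 : c ≠ 0 := by rintro rfl; exact h0 (by simp [hc])
    have hcc : c ≠ -c := by
      intro h
      exact hc0 (by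
        have : (2:F) * c = 0 := by rw [two_mul]; nth_rewrite 2 [h]; ring
        exact (mul_eq_zero.1 this).resolve_left h20)
    have hfil : Finset.univ.filter (fun u : F => u ^ 2 = d) = {c, -c} := by
      ext u
      simp only [Finset.mem_filter, Finset.mem_univ, true_and, Finset.mem_insert,
        Finset.mem_singleton]
      constructor
      · intro h
        have : u * u = c * c := by rw [← pow_two, h, hc]
        exact mul_self_eq_mul_self_iff.1 this
      · rintro (rfl | rfl) <;> rw [hc] <;> ring
    rw [Finset.sum_boole, hfil]
    rw [Finset.card_insert_of_notMem (by simpa using hcc), Finset.card_singleton]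
    rw [quad_val χ h2 h1, if_neg h0, if_pos ⟨c, hc⟩]
    norm_num
  · have he : ∀ u : F, (if u ^ 2 = d then (1:ℂ) else 0) = 0 := by
      intro u
      rw [if_neg]
      intro h
      exact hS ⟨u, by rw [← h]; ring⟩
    rw [Finset.sum_congr rfl (fun u _ => he u), Finset.sum_const, smul_zero]
    rw [quad_val χ h2 h1, if_neg h0, if_neg hS]
    ring

end Aux

theorem sum_quadratic_cubic_eq_jacobi {F : Type*} [Field F] [Fintype F]
    (hchar : ringChar F ≠ 2) (hcard : Fintype.card F % 4 = 1)
    (lam : MulChar F ℂ) (hl2 : lam ^ 2 = 1) (hl1 : lam ≠ 1)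
    (θ : MulChar F ℂ) (hθ : orderOf θ = 4) :
    ∑ x : F, lam (x * (x ^ 2 - 4))
      = -(jac θ θ + jac (lam * θ) (lam * θ)) := by
  classical
  have h20 : (2 : F) ≠ 0 := Ring.two_ne_zero hchar
  have h40 : (4 : F) ≠ 0 := by
    have h : (4 : F) = 2 * 2 := by norm_num
    rw [h]; exact mul_ne_zero h20 h20
  have hl_val := quad_val lam hl2 hl1
  have hneg1 : IsSquare (-1 : F) := FiniteField.isSquare_neg_one_iff.2 (by omega)
  have hlam0 : lam 0 = 0 := MulChar.map_nonunit lam (by simp)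
  have hθ0 : θ 0 = 0 := MulChar.map_nonunit θ (by simp)
  have hlsq1 : ∀ c : F, c ≠ 0 → lam (c * c) = 1 := by
    intro c hc
    rw [hl_val, if_neg (mul_ne_zero hc hc), if_pos ⟨c, rfl⟩]
  have hlneg1 : lam (-1) = 1 := by
    rw [hl_val, if_neg (by norm_num), if_pos hneg1]
  have hlneg : ∀ y : F, lam (-y) = lam y := by
    intro y
    rw [show (-y : F) = (-1) * y by ring, map_mul, hlneg1, one_mul]
  -- θ^2 = lam
  have hθ4 : θ ^ 4 = 1 := by rw [← hθ]; exact pow_orderOf_eq_one θ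
  have hθ2sq : (θ ^ 2) ^ 2 = 1 := by rw [← pow_mul]; exact hθ4
  have hθ2ne : θ ^ 2 ≠ 1 := by
    intro h
    have hd : orderOf θ ∣ 2 := orderOf_dvd_of_pow_eq_one h
    rw [hθ] at hd
    norm_num at hd
  have hθlam : θ ^ 2 = lam := by
    apply MulChar.ext'
    intro a
    rw [quad_val (θ ^ 2) hθ2sq hθ2ne a, hl_val a]
  have hθsq : ∀ y : F, θ (y * y) = lam y := by
    intro y
    by_cases hy : y = 0
    · simp [hy, hθ0, hlam0]
    · rw [map_mul, ← MulChar.mul_apply, ← pow_two, hθlam]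
  -- rewrite the RHS as a single sum
  have hRHS : -(jac θ θ + jac (lam * θ) (lam * θ))
      = ∑ x : F, (θ x * θ (1 - x) + (lam * θ) x * ((lam * θ) (1 - x))) := by
    rw [jac, jac, Finset.sum_add_distrib]
    ring
  rw [hRHS]
  -- the middle double sum
  have hA : ∑ x : F, (θ x * θ (1 - x) + (lam * θ) x * ((lam * θ) (1 - x)))
      = ∑ x : F, ∑ y : F, (if y ^ 2 = x - x ^ 2 then lam y else 0) := by
    apply Finset.sum_congr rfl
    intro x _
    have hxt : x * (1 - x) = x - x ^ 2 := by ring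
    have hterm : θ x * θ (1 - x) + (lam * θ) x * ((lam * θ) (1 - x))
        = θ (x - x ^ 2) + θ (x - x ^ 2) * lam (x - x ^ 2) := by
      rw [MulChar.mul_apply, MulChar.mul_apply, ← hxt, map_mul θ, map_mul lam]
      ring
    rw [hterm]
    set t : F := x - x ^ 2 with ht
    by_cases h0 : t = 0
    · rw [h0, hθ0]
      rw [Finset.sum_eq_zero]
      · ring
      intro y _
      by_cases hy : y ^ 2 = (0:F)
      · rw [if_pos hy, pow_eq_zero_iff (by norm_num) |>.1 hy, hlam0]
      · rw [if_neg hy]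
    by_cases hS : IsSquare t
    · obtain ⟨c, hc⟩ := hS
      have hc0 : c ≠ 0 := by rintro rfl; exact h0 (by simp [hc])
      have hcc : c ≠ -c := by
        intro h
        exact hc0 (by
          have h2c : (2:F) * c = 0 := by rw [two_mul]; nth_rewrite 2 [h]; ring
          exact (mul_eq_zero.1 h2c).resolve_left h20)
      have hfil : Finset.univ.filter (fun y : F => y ^ 2 = t) = {c, -c} := by
        ext u
        simp only [Finset.mem_filter, Finset.mem_univ, true_and, Finset.mem_insert,
          Finset.mem_singleton]
        constructor
        · intro h
          have : u * u = c * c := by rw [← pow_two, h, hc]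
          exact mul_self_eq_mul_self_iff.1 this
        · rintro (rfl | rfl) <;> rw [hc] <;> ring
      rw [show (∑ y : F, if y ^ 2 = t then lam y else 0)
          = ∑ y ∈ Finset.univ.filter (fun y : F => y ^ 2 = t), lam y from
        (Finset.sum_filter _ _).symm]
      rw [hfil, Finset.sum_pair hcc, hlneg c]
      rw [hc, hθsq c, hlsq1 c hc0]
      ring
    · have hθt : lam t = -1 := by rw [hl_val, if_neg h0, if_neg hS]
      rw [hθt]
      rw [Finset.sum_eq_zero]
      · ring
      intro y _
      rw [if_neg]
      intro h
      exact hS ⟨y, by rw [← h]; ring⟩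
  rw [hA, Finset.sum_comm]
  -- inner sum over x for fixed y
  have hC : ∀ y : F, (∑ x : F, if y ^ 2 = x - x ^ 2 then lam y else 0)
      = lam y + lam y * lam (1 - 4 * y ^ 2) := by
    intro y
    have step1 : (∑ x : F, if y ^ 2 = x - x ^ 2 then lam y else 0)
        = lam y * ∑ x : F, (if (2 * x - 1) ^ 2 = 1 - 4 * y ^ 2 then (1:ℂ) else 0) := by
      rw [Finset.mul_sum]
      apply Finset.sum_congr rfl
      intro x _
      have hiff : (y ^ 2 = x - x ^ 2) ↔ ((2 * x - 1) ^ 2 = 1 - 4 * y ^ 2) := by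
        constructor
        · intro h; linear_combination 4 * h
        · intro h
          have h4' : (4 : F) * (y ^ 2) = 4 * (x - x ^ 2) := by linear_combination h
          exact mul_left_cancel₀ h40 h4'
      by_cases hcond : y ^ 2 = x - x ^ 2
      · rw [if_pos hcond, if_pos (hiff.1 hcond)]; ring
      · rw [if_neg hcond, if_neg (fun h => hcond (hiff.2 h))]; ring
    have step2 : (∑ x : F, (if (2 * x - 1) ^ 2 = 1 - 4 * y ^ 2 then (1:ℂ) else 0))
        = ∑ u : F, (if u ^ 2 = 1 - 4 * y ^ 2 then (1:ℂ) else 0) := by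
      let e : F ≃ F := (Equiv.mulLeft₀ (2:F) h20).trans (Equiv.subRight (1:F))
      have he : ∀ x : F, e x = 2 * x - 1 := by
        intro x
        simp [e, Equiv.subRight, Equiv.mulLeft₀]
      calc (∑ x : F, (if (2 * x - 1) ^ 2 = 1 - 4 * y ^ 2 then (1:ℂ) else 0))
          = ∑ x : F, (if (e x) ^ 2 = 1 - 4 * y ^ 2 then (1:ℂ) else 0) := by
            apply Finset.sum_congr rfl; intro x _; rw [he x]
        _ = ∑ u : F, (if u ^ 2 = 1 - 4 * y ^ 2 then (1:ℂ) else 0) :=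
            Equiv.sum_comp e (fun u => if u ^ 2 = 1 - 4 * y ^ 2 then (1:ℂ) else 0)
    rw [step1, step2, sqrt_count hchar lam hl2 hl1]
    ring
  rw [Finset.sum_congr rfl (fun y _ => hC y), Finset.sum_add_distrib,
    MulChar.sum_eq_zero_of_ne_one hl1, zero_add]
  -- now both sides: LHS reindex by x = 4y
  have h160 : IsSquare (-16 : F) := by
    obtain ⟨i, hi⟩ := hneg1
    exact ⟨4 * i, by rw [show (-16 : F) = 16 * (-1) by ring, hi]; ring⟩
  have hl16 : lam (-16) = 1 := by
    rw [hl_val, if_neg, if_pos h160]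
    intro h
    exact h40 (by
      have : (16 : F) = 0 := by linear_combination -h
      have h4 : (4:F) * 4 = 0 := by linear_combination this
      exact (mul_eq_zero.1 h4).resolve_left h40)
  have e4 : ∀ f : F → ℂ, ∑ x : F, f x = ∑ y : F, f (4 * y) := by
    intro f
    exact (Equiv.sum_comp (Equiv.mulLeft₀ (4:F) h40) f).symm
  rw [e4 (fun x => lam (x * (x ^ 2 - 4)))]
  apply Finset.sum_congr rfl
  intro y _
  have harg : (4 * y) * ((4 * y) ^ 2 - 4) = (-16) * (y * (1 - 4 * y ^ 2)) := by ring
  rw [harg, map_mul, hl16, one_mul, map_mul]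
end

section
/- Let F be a finite field of odd characteristic with quadratic character λ, and define B(F, χ) := ∑_{x ∈ F} ∑_{z ∈ F^×} χ(z) · λ(x³ + x²z - 4xz). Then B(F, λ) = 1. -/
open Finset
open scoped Classical

/-!
Since `λ` is quadratic, for `z ≠ 0`
`λ(z)λ(x³ + x(x-4)z) = λ(z²(x³z⁻¹ + x(x-4))) = λ(x³z⁻¹ + x(x-4))`.
As `z` runs over `F^×`, so does `z⁻¹`, and for `x ≠ 0` the values `x³z⁻¹ + c` then run
over `F ∖ {c}`; since `∑_F λ = 0`, the inner sum is `-λ(x(x-4))`. The same two moves,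
applied to `λ(x(x-4)) = λ(1 - 4x⁻¹)` for `x ≠ 0`, give `∑_x λ(x(x-4)) = -λ(1) = -1`.
-/

lemma MulChar.apply_sq_mul_of_sq_eq_one {M R : Type*} [CommMonoid M] [CommRing R]
    {χ : MulChar M R} (hχ : χ ^ 2 = 1) {z : M} (hz : IsUnit z) (y : M) :
    χ (z ^ 2 * y) = χ y := by
  rw [map_mul, map_pow, ← χ.pow_apply' two_ne_zero, hχ, MulChar.one_apply hz, one_mul]

section

variable {F : Type*} [Field F] [Fintype F]

lemma sum_filter_ne_zero_comp_inv {M : Type*} [AddCommGroup M] (f : F → M) :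
    ∑ z ∈ univ.filter (· ≠ 0), f z⁻¹ = ∑ z ∈ univ.filter (· ≠ 0), f z := by
  rw [filter_ne', sum_erase_eq_sub (mem_univ 0), sum_erase_eq_sub (mem_univ 0), inv_zero]
  exact congrArg (· - f 0) (Equiv.sum_comp (Equiv.inv F) f)

variable {R : Type*} [CommRing R] [IsDomain R] {χ : MulChar F R}

lemma MulChar.sum_filter_ne_zero_apply_mul_inv_add (hχ : χ ≠ 1) {a : F} (ha : a ≠ 0) (c : F) :
    ∑ z ∈ univ.filter (· ≠ 0), χ (a * z⁻¹ + c) = -χ c := by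
  have haffine : Function.Bijective fun z : F => a * z + c :=
    (AddGroup.addRight_bijective c).comp (mulLeft_bijective₀ a ha)
  rw [sum_filter_ne_zero_comp_inv fun z => χ (a * z + c), filter_ne',
    sum_erase_eq_sub (mem_univ 0), Fintype.sum_bijective _ haffine _ χ fun _ => rfl,
    χ.sum_eq_zero_of_ne_one hχ]
  simp

lemma MulChar.sum_apply_mul_sub_eq_neg_one (hχ2 : χ ^ 2 = 1) (hχ1 : χ ≠ 1) {b : F}
    (hb : b ≠ 0) :
    ∑ x, χ (x * (x - b)) = -1 := by
  have hsq (x : F) (hx : x ≠ 0) : χ (x * (x - b)) = χ (-b * x⁻¹ + 1) := by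
    rw [← χ.apply_sq_mul_of_sq_eq_one hχ2 (IsUnit.mk0 x hx) (-b * x⁻¹ + 1)]
    congr 1
    field_simp
    ring
  rw [← sum_erase univ (a := 0) (by simp), ← filter_ne',
    sum_congr rfl fun x hx => hsq x (mem_filter.mp hx).2,
    χ.sum_filter_ne_zero_apply_mul_inv_add hχ1 (neg_ne_zero.mpr hb), map_one]

lemma MulChar.sum_filter_ne_zero_mul_apply_cubic (hχ2 : χ ^ 2 = 1) (hχ1 : χ ≠ 1) (b x : F) :
    ∑ z ∈ univ.filter (· ≠ 0), χ z * χ (x ^ 3 + x ^ 2 * z - b * x * z) =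
      -χ (x * (x - b)) := by
  rcases eq_or_ne x 0 with rfl | hx
  · simp
  have hsq (z : F) (hz : z ≠ 0) :
      χ z * χ (x ^ 3 + x ^ 2 * z - b * x * z) = χ (x ^ 3 * z⁻¹ + x * (x - b)) := by
    rw [← map_mul,
      ← χ.apply_sq_mul_of_sq_eq_one hχ2 (IsUnit.mk0 z hz) (x ^ 3 * z⁻¹ + x * (x - b))]
    congr 1
    field_simp
    ring
  rw [sum_congr rfl fun z hz => hsq z (mem_filter.mp hz).2,
    χ.sum_filter_ne_zero_apply_mul_inv_add hχ1 (pow_ne_zero 3 hx)]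

end

theorem Bsum_quadratic {F : Type*} [Field F] [Fintype F]
    (hchar : ringChar F ≠ 2)
    (lam : MulChar F ℂ) (hl2 : lam ^ 2 = 1) (hl1 : lam ≠ 1) :
    Bsum F ⇑lam ⇑lam = 1 := by
  have h4 : (4 : F) ≠ 0 := by
    rw [show (4 : F) = 2 ^ 2 by norm_num]
    exact pow_ne_zero 2 (Ring.two_ne_zero hchar)
  simp only [Bsum, lam.sum_filter_ne_zero_mul_apply_cubic hl2 hl1, sum_neg_distrib,
    lam.sum_apply_mul_sub_eq_neg_one hl2 hl1 h4, neg_neg]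
end

section
/- Let F be a finite field of odd characteristic with quadratic character λ, and let χ be a multiplicative character on F with χ⁴ ≠ 𝟙. Then B(F, χ) := ∑_{x ∈ F} ∑_{z ∈ F^×} χ(z) · λ(x³ + x²z - 4xz) equals χ²(4) · j_F(χ, χ) · j_F(λχ², χ⁻¹). -/
/-!
For `x ∉ {0, 4}` the substitution `z = x² t / (4 - x)` turns `x³ + x²z - 4xz` into `x³ (1 - t)`,
so the inner sum over `z` is `λ(x) χ(x² / (4 - x)) J(χ, λ)`; for `x = 4` it vanishes since
`χ ≠ 1`. Substituting `x = 4u` makes the remaining sum over `x` equal to `χ(4) J(λχ², χ⁻¹)`.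
Finally `J(χ, λ) = χ(4) J(χ, χ)`: with `t = (1 + s) / 2` one has `t (1 - t) = (1 - s²) / 4`, and
`s ↦ s²` hits `u` exactly `1 + λ(u)` times, because `Fˣ` is cyclic and so `λ` is the quadratic
character. Here `J` is Mathlib's `jacobiSum`, the negative of `jac`.
-/

open Finset
open scoped Classical

namespace MulChar

variable {F R : Type*} [Field F] [CommRing R]

lemma apply_sq_eq_one_of_sq_eq_one {ψ : MulChar F R} (hψ : ψ ^ 2 = 1) {a : F} (ha : a ≠ 0) :
    ψ (a ^ 2) = 1 := by
  rw [map_pow, ← pow_apply' ψ two_ne_zero, hψ, one_apply ha.isUnit]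

variable [Fintype F] [IsDomain R]

lemma eq_of_sq_eq_one {ρ ρ' : MulChar F R} (hρ : ρ ^ 2 = 1) (hρ' : ρ' ^ 2 = 1)
    (hρ1 : ρ ≠ 1) (hρ'1 : ρ' ≠ 1) : ρ = ρ' := by
  obtain ⟨g, hg⟩ := IsCyclic.exists_generator (α := Fˣ)
  have apply_generator : ∀ χ : MulChar F R, χ ^ 2 = 1 → χ ≠ 1 → χ g = -1 := by
    intro χ hχ hχ1
    have hsq : χ g * χ g = 1 := by
      rw [← map_mul, ← sq, apply_sq_eq_one_of_sq_eq_one hχ g.ne_zero]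
    refine (mul_self_eq_one_iff.mp hsq).resolve_left fun h ↦ hχ1 ?_
    rw [eq_iff hg, h, one_apply_coe]
  rw [eq_iff hg, apply_generator ρ hρ hρ1, apply_generator ρ' hρ' hρ'1]

lemma eq_quadraticChar [CharZero R] (hF : ringChar F ≠ 2) {ρ : MulChar F R} (hρ : ρ ^ 2 = 1)
    (hρ1 : ρ ≠ 1) : ρ = (quadraticChar F).ringHomComp (Int.castRingHom R) :=
  eq_of_sq_eq_one hρ (((quadraticChar_isQuadratic F).comp _).sq_eq_one) hρ1
    ((ringHomComp_ne_one_iff Int.cast_injective).mpr (quadraticChar_ne_one hF))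

end MulChar

lemma jac_eq_neg_jacobiSum {F : Type*} [Field F] [Fintype F] (χ₁ χ₂ : MulChar F ℂ) :
    jac χ₁ χ₂ = -jacobiSum χ₁ χ₂ :=
  rfl

section CharacterSums

variable {F R : Type*} [Field F] [CommRing R]

lemma four_ne_zero_of_ringChar_ne_two (hF : ringChar F ≠ 2) : (4 : F) ≠ 0 := by
  rw [show (4 : F) = 2 ^ 2 by norm_num]
  exact pow_ne_zero 2 (Ring.two_ne_zero hF)

variable [Fintype F]

lemma sum_comp_sq_eq_sum_quadraticChar (hF : ringChar F ≠ 2) (g : F → R) :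
    ∑ s : F, g (s ^ 2) = ∑ u : F, (1 + (quadraticChar F u : R)) * g u := by
  rw [← sum_fiberwise' univ (· ^ 2) g]
  refine sum_congr rfl fun u _ ↦ ?_
  rw [sum_const, nsmul_eq_mul]
  have hcard := congrArg (Int.cast : ℤ → R) (quadraticChar_card_sqrts hF u)
  push_cast at hcard
  rw [add_comm (1 : R), ← hcard]
  simp

lemma sum_mul_apply_sq_div_eq_mul_jacobiSum (hF : ringChar F ≠ 2) {χ ψ : MulChar F R}
    (hψ : ψ ^ 2 = 1) :
    ∑ x : F, ψ x * χ (x ^ 2 / (4 - x)) = χ 4 * jacobiSum (ψ * χ ^ 2) χ⁻¹ := by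
  have h2 : (2 : F) ≠ 0 := Ring.two_ne_zero hF
  have h4 := four_ne_zero_of_ringChar_ne_two hF
  have hψ4 : ψ 4 = 1 := by
    rw [show (4 : F) = 2 ^ 2 by norm_num, MulChar.apply_sq_eq_one_of_sq_eq_one hψ h2]
  rw [← Equiv.sum_comp (Equiv.mulLeft₀ (4 : F) h4), jacobiSum, mul_sum]
  refine sum_congr rfl fun u _ ↦ ?_
  have harg : (4 * u) ^ 2 / (4 - 4 * u) = 4 * (u ^ 2 * (1 - u)⁻¹) := by
    rw [show (4 : F) - 4 * u = 4 * (1 - u) by ring, div_eq_mul_inv, mul_inv]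
    field_simp
  simp only [Equiv.mulLeft₀_apply, harg, map_mul, map_pow, hψ4, MulChar.mul_apply,
    MulChar.pow_apply' χ two_ne_zero, MulChar.inv_apply']
  ring

variable [IsDomain R]

lemma sum_apply_one_sub_eq_zero {χ : MulChar F R} (hχ : χ ≠ 1) : ∑ u : F, χ (1 - u) = 0 :=
  ((Equiv.subLeft (1 : F)).sum_comp χ).trans (MulChar.sum_eq_zero_of_ne_one hχ)

lemma apply_four_mul_jacobiSum_self (hF : ringChar F ≠ 2) {χ : MulChar F R} (hχ : χ ≠ 1) :
    χ 4 * jacobiSum χ χ = jacobiSum χ ((quadraticChar F).ringHomComp (Int.castRingHom R)) := by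
  have h2 : (2 : F) ≠ 0 := Ring.two_ne_zero hF
  have h4 := four_ne_zero_of_ringChar_ne_two hF
  have hhalf : jacobiSum χ χ = χ 4⁻¹ * ∑ s : F, χ (1 - s ^ 2) := by
    rw [jacobiSum, ← ((Equiv.addLeft (1 : F)).trans (Equiv.divRight₀ 2 h2)).sum_comp, mul_sum]
    refine sum_congr rfl fun s _ ↦ ?_
    rw [← map_mul, ← map_mul]
    congr 1
    simp only [Equiv.trans_apply, Equiv.coe_addLeft, Equiv.divRight₀_apply]
    field_simp
    ring
  have hχ4 : χ 4 * χ 4⁻¹ = 1 := by rw [← map_mul, mul_inv_cancel₀ h4, map_one]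
  rw [hhalf, ← mul_assoc, hχ4, one_mul, sum_comp_sq_eq_sum_quadraticChar hF fun u ↦ χ (1 - u),
    jacobiSum_comm, jacobiSum]
  simp only [add_mul, one_mul, sum_add_distrib, sum_apply_one_sub_eq_zero hχ, zero_add]
  rfl

lemma sum_mul_apply_cubic_eq_mul_jacobiSum {χ ψ : MulChar F R} (hχ : χ ≠ 1) (hψ : ψ ^ 2 = 1)
    (x : F) : ∑ z : F, χ z * ψ (x ^ 3 + x ^ 2 * z - 4 * x * z) =
      ψ x * χ (x ^ 2 / (4 - x)) * jacobiSum χ ψ := by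
  by_cases hx0 : x = 0
  · subst hx0
    simp [MulChar.map_zero]
  by_cases hx4 : x = 4
  · subst hx4
    have hconst : ∀ z : F, (4 : F) ^ 3 + 4 ^ 2 * z - 4 * 4 * z = 4 ^ 3 := fun z ↦ by ring
    rw [sub_self, div_zero, MulChar.map_zero, mul_zero, zero_mul]
    simp only [hconst, ← sum_mul, MulChar.sum_eq_zero_of_ne_one hχ, zero_mul]
  set c := x ^ 2 / (4 - x)
  have hc : c ≠ 0 := div_ne_zero (pow_ne_zero 2 hx0) (sub_ne_zero.mpr (Ne.symm hx4))
  have hψx3 : ψ (x ^ 3) = ψ x := by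
    rw [show x ^ 3 = x * x ^ 2 by ring, map_mul, MulChar.apply_sq_eq_one_of_sq_eq_one hψ hx0,
      mul_one]
  rw [← Equiv.sum_comp (Equiv.mulLeft₀ c hc), jacobiSum, mul_sum]
  refine sum_congr rfl fun t _ ↦ ?_
  have harg : x ^ 3 + x ^ 2 * (c * t) - 4 * x * (c * t) = x ^ 3 * (1 - t) := by
    simp only [c]
    field_simp [sub_ne_zero.mpr (Ne.symm hx4)]
    ring
  simp only [Equiv.mulLeft₀_apply, harg, map_mul, hψx3]
  ring

end CharacterSums

theorem Bsum_generic {F : Type*} [Field F] [Fintype F]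
    (hchar : ringChar F ≠ 2)
    (lam : MulChar F ℂ) (hl2 : lam ^ 2 = 1) (hl1 : lam ≠ 1)
    (χ : MulChar F ℂ) (hχ : χ ^ 4 ≠ 1) :
    Bsum F ⇑χ ⇑lam = (χ ^ 2) 4 * jac χ χ * jac (lam * χ ^ 2) χ⁻¹ := by
  have hχ1 : χ ≠ 1 := by
    rintro rfl
    exact hχ (one_pow 4)
  have hjac : jacobiSum χ lam = χ 4 * jacobiSum χ χ := by
    rw [MulChar.eq_quadraticChar hchar hl2 hl1, apply_four_mul_jacobiSum_self hchar hχ1]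
  have hB : Bsum F χ lam = ∑ x : F, ∑ z : F, χ z * lam (x ^ 3 + x ^ 2 * z - 4 * x * z) := by
    refine sum_congr rfl fun x _ ↦ sum_filter_of_ne fun z _ hz ↦ ?_
    rintro rfl
    simp [MulChar.map_zero] at hz
  calc Bsum F χ lam
      = (∑ x : F, lam x * χ (x ^ 2 / (4 - x))) * jacobiSum χ lam := by
        simp only [hB, sum_mul_apply_cubic_eq_mul_jacobiSum hχ1 hl2, sum_mul]
    _ = (χ ^ 2) 4 * jac χ χ * jac (lam * χ ^ 2) χ⁻¹ := by
        rw [sum_mul_apply_sq_div_eq_mul_jacobiSum hchar hl2, hjac, MulChar.pow_apply' χ two_ne_zero,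
          jac_eq_neg_jacobiSum, jac_eq_neg_jacobiSum]
        ring
end

section
/- Let F be a finite field of odd characteristic and χ a multiplicative character on F with χ⁴ ≠ 𝟙. Then the double character sum B(F, χ) := ∑_{x ∈ F} ∑_{z ∈ F^×} χ(z) · λ(x³ + x²z - 4xz) has absolute value |F| (in any complex embedding). -/
/-!
For `x ∉ {0, 4}` the substitution `z = x²u / (x - 4)` turns the inner sum into
`χ(x² / (x - 4)) λ(x) ∑ᵤ χ(u) λ(1 + u)`, and the last sum is `χ(-1) J(χ, λ)`, where
`J = jacobiSum = -j_F`; the inner sum vanishes at `x = 0` and `x = 4`. Summing over `x = 4s`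
then gives a second Jacobi sum, `J(λχ², χ⁻¹)`, up to a root of unity. Since `χ⁴ ≠ 1`, all
characters involved in the two Jacobi sums are nontrivial, so each has absolute value `|F|^{1/2}`.
-/

open Finset
open scoped Classical

lemma MulChar.norm_apply_eq_one {R : Type*} [CommRing R] [Finite Rˣ] (χ : MulChar R ℂ) {a : R}
    (ha : IsUnit a) : ‖χ a‖ = 1 := by
  cases nonempty_fintype Rˣ
  simpa [ha.unit_spec] using
    Complex.norm_eq_one_of_mem_rootsOfUnity (χ.apply_mem_rootsOfUnity ha.unit)

section JacobiSum

variable {F : Type*} [Field F] [Fintype F]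

lemma jacobiSum_inv_inv_eq_conj (χ φ : MulChar F ℂ) :
    jacobiSum χ⁻¹ φ⁻¹ = starRingEnd ℂ (jacobiSum χ φ) := by
  rw [← MulChar.star_eq_inv, ← MulChar.star_eq_inv]
  exact jacobiSum_ringHomComp χ φ (starRingEnd ℂ)

lemma norm_jacobiSum_eq_sqrt_card {χ φ : MulChar F ℂ} (hχ : χ ≠ 1) (hφ : φ ≠ 1)
    (hχφ : χ * φ ≠ 1) : ‖jacobiSum χ φ‖ = √(Fintype.card F) := by
  have hchar : ringChar ℂ ≠ ringChar F := by
    rw [ringChar.eq_zero]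
    exact (CharP.char_ne_zero_of_finite F (ringChar F)).symm
  have h := jacobiSum_mul_jacobiSum_inv hchar hχ hφ hχφ
  rw [jacobiSum_inv_inv_eq_conj, Complex.mul_conj] at h
  rw [Complex.norm_def, show Complex.normSq (jacobiSum χ φ) = Fintype.card F by
    exact_mod_cast h]

variable {R : Type*} [CommRing R]

lemma sum_mulChar_mul_apply_one_add (χ ψ : MulChar F R) :
    ∑ u, χ u * ψ (1 + u) = χ (-1) * jacobiSum χ ψ := by
  rw [jacobiSum, mul_sum]
  refine Fintype.sum_equiv (Equiv.neg F) _ _ fun u => ?_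
  simp only [Equiv.neg_apply, sub_neg_eq_add, ← mul_assoc, ← map_mul, neg_mul_neg, one_mul]

lemma sum_mulChar_mul_apply_add_mul {a b : F} (ha : a ≠ 0) (hb : b ≠ 0) (χ ψ : MulChar F R) :
    ∑ z, χ z * ψ (a + b * z) = χ (a / b) * ψ a * (χ (-1) * jacobiSum χ ψ) := by
  rw [← sum_mulChar_mul_apply_one_add, mul_sum]
  refine (Fintype.sum_bijective _ (mulLeft_bijective₀ _ (div_ne_zero ha hb)) _ _
    fun u => ?_).symm
  rw [show a + b * (a / b * u) = a * (1 + u) by field_simp, map_mul, map_mul]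
  ring

lemma sum_mulChar_mul_apply_sub {c : F} (hc : c ≠ 0) (φ ψ : MulChar F R) :
    ∑ x, φ x * ψ (x - c) = φ c * ψ (-c) * jacobiSum φ ψ := by
  rw [jacobiSum, mul_sum]
  refine (Fintype.sum_bijective _ (mulLeft_bijective₀ c hc) _ _ fun s => ?_).symm
  rw [show c * s - c = -c * (1 - s) by ring, map_mul, map_mul]
  ring

end JacobiSum

lemma Bsum_inner_eq {F : Type*} [Field F] [Fintype F] {lam χ : MulChar F ℂ}
    (hl2 : lam ^ 2 = 1) (hχ : χ ≠ 1) (x : F) :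
    ∑ z ∈ univ.filter (fun z : F => z ≠ 0), χ z * lam (x ^ 3 + x ^ 2 * z - 4 * x * z) =
      χ (-1) * jacobiSum χ lam * ((lam * χ ^ 2) x * χ⁻¹ (x - 4)) := by
  rw [sum_filter_of_ne fun z _ h => by rintro rfl; exact h (by rw [MulChar.map_zero, zero_mul])]
  rcases eq_or_ne x 0 with rfl | hx0
  · simp [MulChar.map_zero]
  rcases eq_or_ne (x - 4) 0 with hx4 | hx4
  · obtain rfl : x = 4 := sub_eq_zero.mp hx4
    simp_rw [show ∀ z : F, (4 : F) ^ 3 + 4 ^ 2 * z - 4 * 4 * z = 64 by intro z; ring]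
    rw [← sum_mul, MulChar.sum_eq_zero_of_ne_one hχ, sub_self, MulChar.map_zero]
    simp
  have hcube : lam (x ^ 3) = lam x := by
    rw [pow_succ', map_mul, map_pow, ← MulChar.pow_apply' lam two_ne_zero, hl2,
      MulChar.one_apply hx0.isUnit, mul_one]
  simp_rw [show ∀ z, x ^ 3 + x ^ 2 * z - 4 * x * z = x ^ 3 + x * (x - 4) * z by intro z; ring]
  rw [sum_mulChar_mul_apply_add_mul (pow_ne_zero 3 hx0) (mul_ne_zero hx0 hx4), hcube,
    show x ^ 3 / (x * (x - 4)) = x ^ 2 * (x - 4)⁻¹ by field_simp, map_mul, map_pow,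
    MulChar.mul_apply, MulChar.pow_apply' _ two_ne_zero, MulChar.inv_apply']
  ring

theorem Bsum_abs {F : Type*} [Field F] [Fintype F]
    (hchar : ringChar F ≠ 2)
    (lam : MulChar F ℂ) (hl2 : lam ^ 2 = 1) (hl1 : lam ≠ 1)
    (χ : MulChar F ℂ) (hχ : χ ^ 4 ≠ 1) :
    ‖Bsum F ⇑χ ⇑lam‖ = (Fintype.card F : ℝ) := by
  have h4 : (4 : F) ≠ 0 := by
    simpa [show (4 : F) = 2 ^ 2 by norm_num] using Ring.two_ne_zero hchar
  have hl4 : lam ^ 4 = 1 := by rw [show 4 = 2 * 2 from rfl, pow_mul, hl2, one_pow]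
  have hχ1 : χ ≠ 1 := ne_of_apply_ne (· ^ 4) (by simpa using hχ)
  have hχl : χ * lam ≠ 1 := ne_of_apply_ne (· ^ 4) (by simpa [mul_pow, hl4] using hχ)
  have hlχ2 : lam * χ ^ 2 ≠ 1 :=
    ne_of_apply_ne (· ^ 2) (by simpa [mul_pow, hl2, ← pow_mul] using hχ)
  have hlχ : lam * χ ^ 2 * χ⁻¹ ≠ 1 := by
    rwa [sq, ← mul_assoc, mul_inv_cancel_right, mul_comm]
  have hB : Bsum F χ lam = χ (-1) * jacobiSum χ lam *
      ((lam * χ ^ 2) 4 * χ⁻¹ (-4) * jacobiSum (lam * χ ^ 2) χ⁻¹) := by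
    simp only [Bsum, Bsum_inner_eq hl2 hχ1, ← mul_sum, sum_mulChar_mul_apply_sub h4]
  rw [hB, norm_mul, norm_mul, norm_mul, norm_mul,
    MulChar.norm_apply_eq_one _ isUnit_one.neg, MulChar.norm_apply_eq_one _ h4.isUnit,
    MulChar.norm_apply_eq_one _ (neg_ne_zero.mpr h4).isUnit,
    norm_jacobiSum_eq_sqrt_card hχ1 hl1 hχl,
    norm_jacobiSum_eq_sqrt_card hlχ2 (inv_ne_one.mpr hχ1) hlχ]
  simp
end

section
/- Let F_{Q²}/F_Q be a quadratic extension of finite fields of odd characteristic, and let χ₁, χ₂ be nontrivial multiplicative characters on F_{Q²}^× such that χ₁χ₂ is nontrivial. If the restrictions of χ₁ and χ₂ to F_Q^× are both trivial, then the Jacobi sum satisfies j_{F_{Q²}}(χ₁, χ₂) = -Q. -/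
open Finset
open scoped Classical

section Aux

variable {F F' : Type*} [Field F] [Fintype F] [Field F'] [Fintype F'] [Algebra F F']

/-- The additive character `s ↦ ψ (algebraMap F F' s * x)` of `F`. -/
noncomputable def lineChar (ψ : AddChar F' ℂ) (x : F') : AddChar F ℂ :=
  ψ.compAddMonoidHom ((AddMonoidHom.mulRight x).comp (algebraMap F F').toAddMonoidHom)

lemma lineChar_apply (ψ : AddChar F' ℂ) (x : F') (s : F) :
    lineChar ψ x s = ψ (algebraMap F F' s * x) := rfl

lemma inner_sum_eq (ψ : AddChar F' ℂ) (x : F') :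
    ∑ s : F, ψ (algebraMap F F' s * x)
      = if ∀ s : F, ψ (algebraMap F F' s * x) = 1 then (Fintype.card F : ℂ) else 0 := by
  by_cases hx : ∀ s : F, ψ (algebraMap F F' s * x) = 1
  · rw [if_pos hx]
    have h1 : ∑ s : F, ψ (algebraMap F F' s * x) = ∑ _s : F, (1 : ℂ) :=
      Finset.sum_congr rfl (fun s _ => hx s)
    rw [h1, Finset.sum_const, Finset.card_univ, nsmul_eq_mul, mul_one]
  · rw [if_neg hx]
    have hne : (lineChar (F := F) ψ x) ≠ 0 := by
      push_neg at hx
      obtain ⟨s₀, hs₀⟩ := hx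
      intro h
      exact hs₀ (by rw [← lineChar_apply, h, AddChar.zero_apply])
    simpa [lineChar_apply] using AddChar.sum_eq_zero_iff_ne_zero.mpr hne

lemma Zset_card (ψ : AddChar F' ℂ) (hψ : ψ ≠ 0) (hdim : Module.finrank F F' = 2) :
    ((univ : Finset F').filter fun x : F' => ∀ s : F, ψ (algebraMap F F' s * x) = 1).card
      = Fintype.card F := by
  have key : ∑ x : F', ∑ s : F, ψ (algebraMap F F' s * x)
      = (Fintype.card F : ℂ) *
        ((univ : Finset F').filter fun x : F' =>
          ∀ s : F, ψ (algebraMap F F' s * x) = 1).card := by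
    rw [Finset.sum_congr rfl (fun x _ => inner_sum_eq ψ x), Finset.sum_ite,
      Finset.sum_const, Finset.sum_const_zero, add_zero, nsmul_eq_mul, mul_comm]
  have key2 : ∑ x : F', ∑ s : F, ψ (algebraMap F F' s * x)
      = (Fintype.card F : ℂ) * (Fintype.card F : ℂ) := by
    rw [Finset.sum_comm]
    have h0 : ∀ s : F, s ∈ (univ : Finset F) → s ≠ 0 →
        ∑ x : F', ψ (algebraMap F F' s * x) = 0 := by
      intro s _ hs
      have hc : (algebraMap F F' s) ≠ 0 := fun h =>
        hs ((map_eq_zero_iff _ (algebraMap F F').injective).mp h)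
      rw [Fintype.sum_equiv (Equiv.mulLeft₀ _ hc) (fun x => ψ (algebraMap F F' s * x))
        (fun y => ψ y) (fun x => rfl)]
      exact AddChar.sum_eq_zero_iff_ne_zero.mpr hψ
    rw [Finset.sum_eq_single_of_mem (0 : F) (mem_univ _) h0]
    simp only [map_zero, zero_mul, AddChar.map_zero_eq_one]
    rw [Finset.sum_const, Finset.card_univ, nsmul_eq_mul, mul_one,
      Module.card_eq_pow_finrank (K := F) (V := F'), hdim]
    push_cast
    ring
  rw [key] at key2
  have hQ : (Fintype.card F : ℂ) ≠ 0 := Nat.cast_ne_zero.mpr Fintype.card_ne_zero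
  have h' := mul_left_cancel₀ hQ key2
  exact_mod_cast h'


lemma gaussSum_of_triv_res (ψ : AddChar F' ℂ) (hψ : ψ ≠ 0)
    (hdim : Module.finrank F F' = 2)
    {t₀ : F'} (ht₀ : t₀ ≠ 0) (hmem : ∀ s : F, ψ (algebraMap F F' s * t₀) = 1)
    {χ : MulChar F' ℂ} (hχ : χ ≠ 1)
    (hres : ∀ x : F, x ≠ 0 → χ (algebraMap F F' x) = 1) :
    gaussSum χ ψ = (Fintype.card F : ℂ) * χ t₀ := by
  classical
  have hQ1 : (1 : ℕ) ≤ Fintype.card F := Fintype.card_pos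
  have hinj : Function.Injective (fun u : F => algebraMap F F' u * t₀) := by
    intro a b hab
    exact (algebraMap F F').injective (mul_right_cancel₀ ht₀ hab)
  have himg : (univ : Finset F).image (fun u => algebraMap F F' u * t₀)
      = (univ : Finset F').filter fun x : F' => ∀ s : F, ψ (algebraMap F F' s * x) = 1 := by
    apply Finset.eq_of_subset_of_card_le
    · intro y hy
      simp only [Finset.mem_image] at hy
      obtain ⟨u, _, rfl⟩ := hy
      simp only [Finset.mem_filter, Finset.mem_univ, true_and]
      intro s
      rw [← mul_assoc, ← map_mul]
      exact hmem (s * u)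
    · rw [Zset_card ψ hψ hdim, Finset.card_image_of_injective _ hinj, Finset.card_univ]
  have hZsum : ∑ x ∈ ((univ : Finset F').filter fun x : F' =>
      ∀ s : F, ψ (algebraMap F F' s * x) = 1), χ x
      = ((Fintype.card F : ℂ) - 1) * χ t₀ := by
    rw [← himg, Finset.sum_image (fun a _ b _ h => hinj h),
      ← Finset.add_sum_erase _ _ (Finset.mem_univ (0 : F))]
    have h0 : χ (algebraMap F F' (0 : F) * t₀) = 0 := by
      rw [map_zero, zero_mul, MulChar.map_zero]
    rw [h0, zero_add,
      Finset.sum_congr rfl (fun u hu => by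
        rw [map_mul, hres u (Finset.ne_of_mem_erase hu), one_mul]),
      Finset.sum_const, Finset.card_erase_of_mem (mem_univ _), Finset.card_univ,
      nsmul_eq_mul, Nat.cast_sub hQ1, Nat.cast_one]
  have step1 : ∀ s : F, s ≠ 0 →
      gaussSum χ ψ = ∑ x : F', χ x * ψ (algebraMap F F' s * x) := by
    intro s hs
    have hc : algebraMap F F' s ≠ 0 := fun h =>
      hs ((map_eq_zero_iff _ (algebraMap F F').injective).mp h)
    refine (Fintype.sum_equiv (Equiv.mulLeft₀ _ hc)
      (fun x => χ x * ψ (algebraMap F F' s * x)) (fun y => χ y * ψ y) (fun x => ?_)).symm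
    show χ x * ψ (algebraMap F F' s * x)
      = χ (algebraMap F F' s * x) * ψ (algebraMap F F' s * x)
    rw [map_mul χ, hres s hs, one_mul]
  have step2 : ((Fintype.card F : ℂ) - 1) * gaussSum χ ψ
      = ∑ s ∈ (univ : Finset F).erase 0, ∑ x : F', χ x * ψ (algebraMap F F' s * x) := by
    rw [Finset.sum_congr rfl (fun s hs => (step1 s (Finset.ne_of_mem_erase hs)).symm),
      Finset.sum_const, Finset.card_erase_of_mem (mem_univ _), Finset.card_univ,
      nsmul_eq_mul, Nat.cast_sub hQ1, Nat.cast_one]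
  have step3 : ∑ s ∈ (univ : Finset F).erase 0, ∑ x : F', χ x * ψ (algebraMap F F' s * x)
      = ((Fintype.card F : ℂ) - 1) * ((Fintype.card F : ℂ) * χ t₀) := by
    rw [Finset.sum_comm]
    have hx : ∀ x : F', ∑ s ∈ (univ : Finset F).erase 0, χ x * ψ (algebraMap F F' s * x)
        = χ x * (∑ s : F, ψ (algebraMap F F' s * x)) - χ x := by
      intro x
      rw [← Finset.mul_sum, Finset.sum_erase_eq_sub (mem_univ _)]
      simp only [map_zero, zero_mul, AddChar.map_zero_eq_one]
      ring
    rw [Finset.sum_congr rfl (fun x _ => hx x), Finset.sum_sub_distrib,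
      MulChar.sum_eq_zero_of_ne_one hχ, sub_zero,
      Finset.sum_congr rfl (fun x _ => by rw [inner_sum_eq ψ x])]
    have : ∑ x : F', χ x * (if ∀ s : F, ψ (algebraMap F F' s * x) = 1
        then (Fintype.card F : ℂ) else 0)
        = ∑ x ∈ ((univ : Finset F').filter fun x : F' =>
            ∀ s : F, ψ (algebraMap F F' s * x) = 1), χ x * (Fintype.card F : ℂ) := by
      rw [Finset.sum_filter]
      exact Finset.sum_congr rfl (fun x _ => by split <;> simp
      )
    rw [this, ← Finset.sum_mul, hZsum]
    ring
  have hcard2 : (1 : ℕ) < Fintype.card F := Fintype.one_lt_card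
  have hne : ((Fintype.card F : ℂ) - 1) ≠ 0 := by
    intro h
    have : ((Fintype.card F : ℕ) : ℂ) = ((1 : ℕ) : ℂ) := by push_cast; linear_combination h
    exact absurd (Nat.cast_injective this) (by omega)
  exact mul_left_cancel₀ hne (step2.trans step3)

end Aux

theorem jacobi_sum_quadratic_extension {F F' : Type*} [Field F] [Fintype F]
    [Field F'] [Fintype F'] [Algebra F F']
    (hchar : ringChar F ≠ 2) (hdim : Module.finrank F F' = 2)
    (χ₁ χ₂ : MulChar F' ℂ) (h1 : χ₁ ≠ 1) (h2 : χ₂ ≠ 1) (h12 : χ₁ * χ₂ ≠ 1)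
    (hres1 : ∀ x : F, x ≠ 0 → χ₁ (algebraMap F F' x) = 1)
    (hres2 : ∀ x : F, x ≠ 0 → χ₂ (algebraMap F F' x) = 1) :
    jac χ₁ χ₂ = -(Fintype.card F : ℂ) := by
  classical
  set ψ := AddChar.FiniteField.primitiveChar_to_Complex F' with hψdef
  have hprim := AddChar.FiniteField.primitiveChar_to_Complex_isPrimitive F'
  have hψ : ψ ≠ 0 := by
    have h := hprim (one_ne_zero : (1 : F') ≠ 0)
    rw [AddChar.mulShift_one] at h
    rw [← AddChar.one_eq_zero]
    exact h
  -- find a nonzero element of the "kernel line"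
  have hcard : ((univ : Finset F').filter fun x : F' =>
      ∀ s : F, ψ (algebraMap F F' s * x) = 1).card = Fintype.card F :=
    Zset_card ψ hψ hdim
  have hex : ∃ t₀ ∈ ((univ : Finset F').filter fun x : F' =>
      ∀ s : F, ψ (algebraMap F F' s * x) = 1), t₀ ≠ 0 := by
    by_contra h
    push_neg at h
    have hsub : ((univ : Finset F').filter fun x : F' =>
        ∀ s : F, ψ (algebraMap F F' s * x) = 1) ⊆ {0} :=
      fun x hx => Finset.mem_singleton.mpr (h x hx)
    have hle := Finset.card_le_card hsub
    rw [hcard, Finset.card_singleton] at hle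
    have : (1 : ℕ) < Fintype.card F := Fintype.one_lt_card
    omega
  obtain ⟨t₀, ht₀Z, ht₀⟩ := hex
  have hmem : ∀ s : F, ψ (algebraMap F F' s * t₀) = 1 :=
    (Finset.mem_filter.mp ht₀Z).2
  have hres12 : ∀ x : F, x ≠ 0 → (χ₁ * χ₂) (algebraMap F F' x) = 1 := by
    intro x hx
    rw [MulChar.mul_apply, hres1 x hx, hres2 x hx, one_mul]
  have hg1 := gaussSum_of_triv_res ψ hψ hdim ht₀ hmem h1 hres1
  have hg2 := gaussSum_of_triv_res ψ hψ hdim ht₀ hmem h2 hres2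
  have hg12 := gaussSum_of_triv_res ψ hψ hdim ht₀ hmem h12 hres12
  have hJ := jacobiSum_mul_nontrivial h12 ψ
  rw [hg1, hg2, hg12, MulChar.mul_apply] at hJ
  have hQ : (Fintype.card F : ℂ) ≠ 0 := Nat.cast_ne_zero.mpr Fintype.card_ne_zero
  have hχne : ∀ χ : MulChar F' ℂ, χ t₀ ≠ 0 := by
    intro χ
    have h : χ t₀ * χ t₀⁻¹ = 1 := by
      rw [← map_mul, mul_inv_cancel₀ ht₀, map_one]
    exact left_ne_zero_of_mul_eq_one h
  have hJval : jacobiSum χ₁ χ₂ = (Fintype.card F : ℂ) := by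
    have hne : (Fintype.card F : ℂ) * (χ₁ t₀ * χ₂ t₀) ≠ 0 :=
      mul_ne_zero hQ (mul_ne_zero (hχne χ₁) (hχne χ₂))
    apply mul_left_cancel₀ hne
    rw [hJ]
    ring
  have : jac χ₁ χ₂ = -jacobiSum χ₁ χ₂ := rfl
  rw [this, hJval]
end

section
/- Let q be an odd prime power and n ≥ 1. The even integer d_n := q^n + 1 is supersingular and satisfies I_q(d_n) ≥ (log √q) · d_n / log d_n, where I_q(D) := ∑_{e | D} φ(e)/o_q(e) (with the convention φ(1)/o_q(1) = 0, i.e., the e = 1 term contributes 0). -/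
/-!
Modulo every divisor `e` of `d = q ^ n + 1` we have `q ^ n = -1`, so `o_q(e) ∣ 2n`. Bounding every
term of `I_q(d)` by `φ(e) / 2n`, except the term `e = 2`, which equals `1` since `q` is odd, and
using `∑_{e ∣ d} φ(e) = d` gives `I_q(d) ≥ 1 + (d - 2) / 2n ≥ d / 2n`. Finally
`n log q ≤ log d` turns `d / 2n` into `log √q · d / log d`.
-/

/-- `I_q(D) = ∑_{e ∣ D, e > 1} φ(e) / o_q(e)`, where `o_q(e)` is the multiplicative
order of `q` modulo `e` (the term `e = 1` contributes `0`). -/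
noncomputable def Iq (q D : ℕ) : ℝ :=
  ∑ e ∈ D.divisors.filter (fun e => 1 < e),
    (Nat.totient e : ℝ) / (orderOf (q : ZMod e) : ℝ)

open Finset Real

theorem orderOf_dvd_two_mul_of_dvd_pow_add_one {q n e : ℕ} (h : e ∣ q ^ n + 1) :
    orderOf (q : ZMod e) ∣ 2 * n := by
  apply orderOf_dvd_of_pow_eq_one
  have hzero : ((q ^ n + 1 : ℕ) : ZMod e) = 0 := (ZMod.natCast_eq_zero_iff _ _).mpr h
  push_cast at hzero
  rw [pow_mul', eq_neg_of_add_eq_zero_left hzero]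
  norm_num

theorem filter_one_lt_divisors_of_even {D : ℕ} (hD : Even D) (hD0 : D ≠ 0) :
    D.divisors.filter (1 < ·) = insert 2 (D.divisors.filter (2 < ·)) := by
  have h2 : 2 ∣ D := hD.two_dvd
  ext e
  simp only [mem_filter, mem_insert, Nat.mem_divisors]
  grind

theorem sum_totient_filter_two_lt_divisors {D : ℕ} (hD : Even D) (hD0 : D ≠ 0) :
    ∑ e ∈ D.divisors.filter (2 < ·), (e.totient : ℝ) = D - 2 := by
  have hsmall : D.divisors.filter (¬ 2 < ·) = {1, 2} := by
    have h2 : 2 ∣ D := hD.two_dvd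
    ext e
    simp only [mem_filter, mem_insert, mem_singleton, Nat.mem_divisors]
    constructor
    · rintro ⟨⟨he, -⟩, h⟩
      have := Nat.pos_of_dvd_of_pos he (Nat.pos_of_ne_zero hD0)
      omega
    · rintro (rfl | rfl)
      · exact ⟨⟨one_dvd D, hD0⟩, by omega⟩
      · exact ⟨⟨h2, hD0⟩, by omega⟩
  have htot := Nat.sum_totient D
  rw [← sum_filter_add_sum_filter_not _ (2 < ·), hsmall] at htot
  norm_num at htot
  rw [← Nat.cast_sum, eq_sub_iff_add_eq]
  exact_mod_cast htot

theorem div_le_Iq_of_orderOf_dvd {q D m : ℕ} (hq : Odd q) (hD : Even D) (hD0 : D ≠ 0)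
    (hm : 2 ≤ m) (horder : ∀ e ∈ D.divisors, orderOf (q : ZMod e) ∣ m) :
    (D : ℝ) / m ≤ Iq q D := by
  have hm0 : (0 : ℝ) < m := by positivity
  have hterm_two : ((2 : ℕ).totient : ℝ) / orderOf (q : ZMod 2) = 1 := by
    rw [(ZMod.natCast_eq_one_iff_odd).mpr hq, orderOf_one]
    norm_num
  have hterm_ge (e : ℕ) (he : e ∈ D.divisors.filter (2 < ·)) :
      (e.totient : ℝ) / m ≤ e.totient / orderOf (q : ZMod e) := by
    have hdvd := horder e (mem_filter.mp he).1
    apply div_le_div_of_nonneg_left (by positivity)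
    · exact_mod_cast Nat.pos_of_dvd_of_pos hdvd (by omega)
    · exact_mod_cast Nat.le_of_dvd (by omega) hdvd
  have hsplit : Iq q D = 1 + ∑ e ∈ D.divisors.filter (2 < ·),
      (e.totient : ℝ) / orderOf (q : ZMod e) := by
    rw [Iq, filter_one_lt_divisors_of_even hD hD0, sum_insert (by simp), hterm_two]
  have htwo_div : (2 : ℝ) / m ≤ 1 := (div_le_one hm0).mpr (by exact_mod_cast hm)
  calc (D : ℝ) / m ≤ 1 + (D - 2) / m := by rw [sub_div]; linarith
    _ = 1 + ∑ e ∈ D.divisors.filter (2 < ·), (e.totient : ℝ) / m := by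
        rw [← sum_div, sum_totient_filter_two_lt_divisors hD hD0]
    _ ≤ Iq q D := by
        rw [hsplit]
        exact add_le_add_right (sum_le_sum hterm_ge) 1

theorem log_sqrt_mul_div_log_pow_add_one_le {x : ℝ} (hx : 1 ≤ x) {n : ℕ} (hn : 0 < n) :
    log √x * (x ^ n + 1) / log (x ^ n + 1) ≤ (x ^ n + 1) / (2 * n) := by
  have hpow : 1 ≤ x ^ n := one_le_pow₀ hx
  have hlog_pos : 0 < log (x ^ n + 1) := log_pos (by linarith)
  have hlog_le : n * log x ≤ log (x ^ n + 1) := by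
    rw [← log_pow]
    exact log_le_log (by linarith) (by linarith)
  rw [log_sqrt (by linarith), div_le_div_iff₀ hlog_pos (by positivity)]
  nlinarith

theorem supersingular_even_sequence_general (q n : ℕ) (hq : Odd q)
    (hn : 1 ≤ n) :
    Even (q ^ n + 1) ∧ (∃ a : ℕ, 1 ≤ a ∧ (q ^ n + 1) ∣ q ^ a + 1) ∧
    Iq q (q ^ n + 1)
      ≥ Real.log (Real.sqrt q) * ((q : ℝ) ^ n + 1) / Real.log ((q : ℝ) ^ n + 1) := by
  have heven : Even (q ^ n + 1) := hq.pow.add_one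
  refine ⟨heven, ⟨n, hn, dvd_rfl⟩, ?_⟩
  have hIq := div_le_Iq_of_orderOf_dvd hq heven (by omega) (m := 2 * n) (by omega)
    fun e he => orderOf_dvd_two_mul_of_dvd_pow_add_one (Nat.dvd_of_mem_divisors he)
  have hlog := log_sqrt_mul_div_log_pow_add_one_le (x := q) (by exact_mod_cast hq.pos) hn
  push_cast at hIq
  exact hlog.trans hIq

theorem supersingular_even_sequence (q n : ℕ) (hq : Odd q) (hqpp : IsPrimePow q)
    (hn : 1 ≤ n) :
    Even (q ^ n + 1) ∧ (∃ a : ℕ, 1 ≤ a ∧ (q ^ n + 1) ∣ q ^ a + 1) ∧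
    Iq q (q ^ n + 1)
      ≥ Real.log (Real.sqrt q) * ((q : ℝ) ^ n + 1) / Real.log ((q : ℝ) ^ n + 1) :=
  supersingular_even_sequence_general q n hq hn
end

section
/- Let q be an odd prime power and n ≥ 1. The integer d_n := ∑_{i=0}^{2n} (-q)^i = (q^{2n+1}+1)/(q+1) is odd, the integer 2d_n is supersingular (it divides q^{2n+1}+1), and I_q(2d_n) ≥ d_n/(2n+1) ≥ (log √q) · d_n / log d_n. -/
open Finset

theorem add_one_mul_geom_sum_neg {R : Type*} [CommRing R] (x : R) {m : ℕ} (hm : Odd m) :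
    (x + 1) * ∑ i ∈ range m, (-x) ^ i = x ^ m + 1 := by
  have h := geom_sum_mul (-x) m
  rw [hm.neg_pow] at h
  linear_combination -h

theorem Int.odd_geom_sum {x : ℤ} {m : ℕ} (hx : Odd x) (hm : Odd m) :
    Odd (∑ i ∈ Finset.range m, x ^ i) := by
  rw [← ZMod.intCast_eq_one_iff_odd] at hx ⊢
  push_cast
  rw [hx]
  simpa using ZMod.natCast_eq_one_iff_odd.mpr hm

theorem Nat.pow_le_sq_of_add_one_mul_eq {q m d : ℕ} (hq : 2 ≤ q) (hm : 3 ≤ m)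
    (h : (q + 1) * d = q ^ m + 1) : q ^ m ≤ d ^ 2 := by
  have hq3 : q ^ 3 ≤ q ^ m := Nat.pow_le_pow_right (by omega) hm
  have hcube : q ^ 2 + 2 * q ≤ q ^ 3 := by nlinarith [Nat.mul_le_mul_left q (Nat.mul_le_mul_left q hq)]
  have hd : q + 1 ≤ d := Nat.le_of_mul_le_mul_left (by nlinarith) (by omega : 0 < q + 1)
  nlinarith

theorem Real.log_sqrt_mul_div_log_le {q d m : ℕ} (hq : 0 < q) (hm : 0 < m)
    (h : q ^ m ≤ d ^ 2) :
    Real.log (Real.sqrt q) * d / Real.log d ≤ d / m := by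
  rcases Nat.lt_or_ge 1 d with hd | hd
  · have hlogd : 0 < Real.log d := Real.log_pos (by exact_mod_cast hd)
    have hlog : m * Real.log q ≤ 2 * Real.log d := by
      have := Real.log_le_log (by positivity) (by exact_mod_cast h : (q : ℝ) ^ m ≤ (d : ℝ) ^ 2)
      rwa [Real.log_pow, Real.log_pow] at this
    rw [Real.log_sqrt (by positivity), div_le_div_iff₀ hlogd (by positivity)]
    have hd0 : (0 : ℝ) ≤ d := by positivity
    nlinarith
  · have : Real.log d = 0 := by interval_cases d <;> simp
    rw [this, div_zero]
    positivity

theorem ZMod.natCast_pow_two_mul_eq_one {q e a : ℕ} (h : e ∣ q ^ a + 1) :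
    (q : ZMod e) ^ (2 * a) = 1 := by
  have h' := (ZMod.natCast_eq_zero_iff (q ^ a + 1) e).mpr h
  push_cast at h'
  rw [pow_mul', eq_neg_of_add_eq_zero_left h', neg_one_sq]

theorem totient_div_le_totient_div_orderOf {q e a : ℕ} (ha : 0 < a) (h : e ∣ q ^ a + 1) :
    (e.totient : ℝ) / (2 * a) ≤ e.totient / orderOf (q : ZMod e) := by
  have hpow := ZMod.natCast_pow_two_mul_eq_one h
  have hpos : 0 < orderOf (q : ZMod e) :=
    (isOfFinOrder_iff_pow_eq_one.mpr ⟨2 * a, by omega, hpow⟩).orderOf_pos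
  have hle : orderOf (q : ZMod e) ≤ 2 * a := orderOf_le_of_pow_eq_one (by omega) hpow
  exact div_le_div_of_nonneg_left (by positivity) (by exact_mod_cast hpos) (by exact_mod_cast hle)

theorem Nat.sum_totient_filter_one_lt {D : ℕ} (hD : D ≠ 0) :
    ∑ e ∈ D.divisors.filter (fun e => 1 < e), e.totient + 1 = D := by
  have hone : D.divisors.filter (fun e => ¬ 1 < e) = {1} := by
    ext e
    simp only [mem_filter, Nat.mem_divisors, mem_singleton]
    constructor
    · rintro ⟨⟨he, -⟩, he1⟩
      have := Nat.pos_of_dvd_of_pos he (Nat.pos_of_ne_zero hD)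
      omega
    · rintro rfl
      exact ⟨⟨one_dvd D, hD⟩, lt_irrefl 1⟩
  conv_rhs => rw [← Nat.sum_totient D, ← sum_filter_add_sum_filter_not _ (fun e => 1 < e)]
  rw [hone, sum_singleton, Nat.totient_one]

theorem Iq_ge_of_dvd_pow_add_one {q a D : ℕ} (hq : Odd q) (ha : 0 < a) (h2 : 2 ∣ D)
    (hD : D ∣ q ^ a + 1) : (D : ℝ) / (2 * a) ≤ Iq q D := by
  set S := D.divisors.filter (fun e => 1 < e)
  have hD0 : D ≠ 0 := ne_zero_of_dvd_ne_zero (by positivity) hD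
  have h2S : 2 ∈ S := by simp [S, h2, hD0]
  -- the term `e = 2` of `Iq q D` is `1 ≥ 2 / (2a)`, absorbing the missing `φ(1)` of `∑ φ(e) = D`
  have hsum : ∑ e ∈ S, ((e.totient : ℝ) + if e = 2 then 1 else 0) = D := by
    rw [sum_add_distrib, sum_ite_eq' S 2, if_pos h2S, ← Nat.sum_totient_filter_one_lt hD0]
    push_cast
    rfl
  rw [← hsum, sum_div, Iq]
  refine sum_le_sum fun e he => ?_
  have heD : e ∣ q ^ a + 1 := (Nat.dvd_of_mem_divisors (mem_filter.mp he).1).trans hD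
  split_ifs with he2
  · subst he2
    rw [ZMod.natCast_eq_one_iff_odd.mpr hq, orderOf_one, Nat.totient_two]
    have : (1 : ℝ) ≤ a := by exact_mod_cast ha
    rw [div_le_iff₀ (by positivity)]
    push_cast
    linarith
  · simpa using totient_div_le_totient_div_orderOf ha heD

theorem supersingular_odd_sequence (q n : ℕ) (hq : Odd q) (hqpp : IsPrimePow q)
    (hn : 1 ≤ n) (d : ℕ)
    (hd : (d : ℤ) = ∑ i ∈ Finset.range (2 * n + 1), (-(q : ℤ)) ^ i) :
    Odd d ∧ ((q : ℤ) + 1) * (d : ℤ) = (q : ℤ) ^ (2 * n + 1) + 1 ∧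
    (2 * d) ∣ q ^ (2 * n + 1) + 1 ∧
    Iq q (2 * d) ≥ (d : ℝ) / (2 * n + 1) ∧
    (d : ℝ) / (2 * n + 1) ≥ Real.log (Real.sqrt q) * (d : ℝ) / Real.log (d : ℝ) := by
  have hm : Odd (2 * n + 1) := odd_two_mul_add_one n
  have hprod : ((q : ℤ) + 1) * d = (q : ℤ) ^ (2 * n + 1) + 1 :=
    hd ▸ add_one_mul_geom_sum_neg (q : ℤ) hm
  have hprodN : (q + 1) * d = q ^ (2 * n + 1) + 1 := by exact_mod_cast hprod
  have hodd : Odd d := by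
    have := hd ▸ Int.odd_geom_sum ((Int.odd_coe_nat q).mpr hq).neg hm
    exact_mod_cast this
  have hdvd : 2 * d ∣ q ^ (2 * n + 1) + 1 :=
    hprodN ▸ mul_dvd_mul_right (even_iff_two_dvd.mp hq.add_one) d
  refine ⟨hodd, hprod, hdvd, ?_, ?_⟩
  · have := Iq_ge_of_dvd_pow_add_one hq (Nat.succ_pos _) (dvd_mul_right 2 d) hdvd
    push_cast at this
    rwa [mul_div_mul_left _ _ two_ne_zero] at this
  · have := Real.log_sqrt_mul_div_log_le hq.pos (Nat.succ_pos _)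
      (Nat.pow_le_sq_of_add_one_mul_eq hqpp.two_le (by omega) hprodN)
    exact_mod_cast this
end

section
/- Let p be an odd prime, ℓ ≠ 2, p a prime such that p generates (ℤ/ℓ^bℤ)^× and (ℤ/2ℓ^bℤ)^× for all b ≥ 1, and let r ≥ 1. Then 2ℓ^r divides p^a + 1 for some a ≥ 1 (i.e., 2ℓ^r is supersingular), and I_p(2ℓ^r) := ∑_{e | 2ℓ^r, e>1} φ(e)/o_p(e) equals 2r + 1. -/
/-! If `p` is a primitive root modulo every divisor `e > 1` of `2ℓ^r`, each term `φ(e)/o_p(e)` of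
`I_p(2ℓ^r)` equals `1`, so `I_p(2ℓ^r)` counts the `2(r + 1) - 1` nontrivial divisors. Since the
generator `p` of the unit group modulo `2ℓ^r` reaches every unit, some positive power of it is `-1`. -/

open Nat Finset

theorem ZMod.exists_pow_eq_neg_one_of_orderOf_eq_totient {n : ℕ} [NeZero n] {x : ZMod n}
    (hx : orderOf x = φ n) : ∃ a, 1 ≤ a ∧ x ^ a = -1 := by
  have hx₀ : 0 < orderOf x := hx ▸ totient_pos.mpr (NeZero.pos n)
  set u := (orderOf_pos_iff.mp hx₀).isUnit.unit
  have hu : Subgroup.zpowers u = ⊤ := by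
    refine Subgroup.eq_top_of_card_eq _ ?_
    rw [Nat.card_zpowers, ← orderOf_units, IsUnit.unit_spec, hx, Nat.card_eq_fintype_card,
      ZMod.card_units_eq_totient]
  obtain ⟨k, hk⟩ := mem_powers_iff_mem_zpowers.mpr (hu ▸ Subgroup.mem_top (-1 : (ZMod n)ˣ))
  refine ⟨k + orderOf x, by omega, ?_⟩
  rw [pow_add, pow_orderOf_eq_one, mul_one]
  simpa [u] using congrArg Units.val hk

theorem Iq_eq_card_divisors_sub_one {q D : ℕ} (hD : D ≠ 0)
    (h : ∀ e ∈ D.divisors, 1 < e → orderOf (q : ZMod e) = φ e) :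
    Iq q D = #D.divisors - 1 := by
  have hterm : ∀ e ∈ D.divisors.filter (1 < ·), (φ e : ℝ) / orderOf (q : ZMod e) = 1 := by
    intro e he
    obtain ⟨he, he₁⟩ := Finset.mem_filter.mp he
    rw [h e he he₁, div_self (by exact_mod_cast (totient_pos.mpr (by omega)).ne')]
  have hfilter : D.divisors.filter (1 < ·) = D.divisors.erase 1 := by
    rw [← Finset.filter_ne']
    exact Finset.filter_congr fun e he ↦ by have := pos_of_mem_divisors he; omega
  have h₁ : 1 ∈ D.divisors := one_mem_divisors.mpr hD
  rw [Iq, Finset.sum_congr rfl hterm, Finset.sum_const, nsmul_one, hfilter,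
    Finset.card_erase_of_mem h₁, Nat.cast_pred (card_pos.mpr ⟨1, h₁⟩)]

theorem card_divisors_two_mul_prime_pow {ℓ : ℕ} (hl : ℓ.Prime) (hlodd : Odd ℓ) (r : ℕ) :
    #(2 * ℓ ^ r).divisors = 2 * (r + 1) := by
  rw [Coprime.card_divisors_mul ((Nat.coprime_two_left.mpr hlodd).pow_right r),
    Nat.Prime.divisors prime_two, card_pair (by norm_num), Nat.divisors_prime_pow hl,
    Finset.card_map, Finset.card_range]

theorem Nat.exists_eq_pow_or_eq_mul_pow_of_dvd_mul_pow {q ℓ e r : ℕ} (hq : q.Prime)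
    (hl : ℓ.Prime) (he : e ∣ q * ℓ ^ r) : (∃ b, e = ℓ ^ b) ∨ ∃ b, e = q * ℓ ^ b := by
  obtain ⟨c, d, hc, hd, rfl⟩ := Nat.dvd_mul.mp he
  obtain ⟨b, -, rfl⟩ := (Nat.dvd_prime_pow hl).mp hd
  rcases (Nat.dvd_prime hq).mp hc with rfl | rfl
  · exact .inl ⟨b, one_mul _⟩
  · exact .inr ⟨b, rfl⟩

theorem orderOf_eq_totient_of_dvd_two_mul_pow {p ℓ e r : ℕ} (hpodd : Odd p) (hl : ℓ.Prime)
    (hgen : ∀ b : ℕ, 1 ≤ b →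
      orderOf ((p : ZMod (ℓ ^ b))) = φ (ℓ ^ b) ∧
      orderOf ((p : ZMod (2 * ℓ ^ b))) = φ (2 * ℓ ^ b))
    (he : e ∣ 2 * ℓ ^ r) (he₁ : 1 < e) : orderOf (p : ZMod e) = φ e := by
  rcases Nat.exists_eq_pow_or_eq_mul_pow_of_dvd_mul_pow prime_two hl he with ⟨b, rfl⟩ | ⟨b, rfl⟩
  · obtain _ | b := b
    · simp at he₁
    · exact (hgen _ b.succ_pos).1
  · obtain _ | b := b
    · rw [pow_zero, mul_one, ZMod.natCast_eq_one_iff_odd.mpr hpodd, orderOf_one, totient_two]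
    · exact (hgen _ b.succ_pos).2

theorem Iq_two_ell_pow_general (p ℓ : ℕ) (hpodd : Odd p)
    (hl : ℓ.Prime) (hlodd : Odd ℓ)
    (hgen : ∀ b : ℕ, 1 ≤ b →
      orderOf ((p : ZMod (ℓ ^ b))) = Nat.totient (ℓ ^ b) ∧
      orderOf ((p : ZMod (2 * ℓ ^ b))) = Nat.totient (2 * ℓ ^ b))
    (r : ℕ) :
    (∃ a : ℕ, 1 ≤ a ∧ (2 * ℓ ^ r) ∣ p ^ a + 1) ∧
    Iq p (2 * ℓ ^ r) = 2 * (r : ℝ) + 1 := by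
  have hD : 2 * ℓ ^ r ≠ 0 := mul_ne_zero two_ne_zero (pow_ne_zero r hl.ne_zero)
  have hord : ∀ e ∈ (2 * ℓ ^ r).divisors, 1 < e → orderOf (p : ZMod e) = φ e :=
    fun e he he₁ ↦
      orderOf_eq_totient_of_dvd_two_mul_pow hpodd hl hgen (dvd_of_mem_divisors he) he₁
  refine ⟨?_, ?_⟩
  · have : NeZero (2 * ℓ ^ r) := ⟨hD⟩
    have hD₁ : 1 < 2 * ℓ ^ r :=
      one_lt_two.trans_le (Nat.le_mul_of_pos_right 2 (pow_pos hl.pos r))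
    obtain ⟨a, ha, hpa⟩ := ZMod.exists_pow_eq_neg_one_of_orderOf_eq_totient
      (hord _ (mem_divisors_self _ hD) hD₁)
    refine ⟨a, ha, (ZMod.natCast_eq_zero_iff _ _).mp ?_⟩
    push_cast
    rw [hpa, neg_add_cancel]
  · rw [Iq_eq_card_divisors_sub_one hD hord, card_divisors_two_mul_prime_pow hl hlodd]
    push_cast
    ring

theorem Iq_two_ell_pow (p ℓ : ℕ) (hp : p.Prime) (hpodd : Odd p)
    (hl : ℓ.Prime) (hlodd : Odd ℓ) (hlp : ℓ ≠ p)
    (hgen : ∀ b : ℕ, 1 ≤ b →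
      orderOf ((p : ZMod (ℓ ^ b))) = Nat.totient (ℓ ^ b) ∧
      orderOf ((p : ZMod (2 * ℓ ^ b))) = Nat.totient (2 * ℓ ^ b))
    (r : ℕ) (hr : 1 ≤ r) :
    (∃ a : ℕ, 1 ≤ a ∧ (2 * ℓ ^ r) ∣ p ^ a + 1) ∧
    Iq p (2 * ℓ ^ r) = 2 * (r : ℝ) + 1 :=
  Iq_two_ell_pow_general p ℓ hpodd hl hlodd hgen r
end
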